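/- (Proposition 5, Appendix D: unbiased estimator for loss functions with polynomial dependence on the observables.) Let I be a finite index set, D ≥ 0 and J ≥ 1 integers, and for each i ∈ I, z ∈ {0,…,D}, j ∈ {1,…,J} let p_{i,z} ∈ ℝ and c_{i,j} ∈ ℝ be coefficients and μ_{i,j} ∈ ℝ target expectation values. For each (i,j) let (r_{i,j,k})_{k≥1} be a sequence of i.i.d. bounded real random variables with mean μ_{i,j}, mutually independent across distinct (i,j). Let (s_{i,j}) be a family of ℕ-valued random variables, jointly independent of all outcome sequences, such that for every i, z and every tuple of nonnegative integers (b_1,…,b_J) with b_1+⋯+b_J = z, the expectation N_{i,b} := E[∏_{j=1}^{J} s_{i,j}(s_{i,j}−1)⋯(s_{i,j}−b_j+1)] is finite and strictly positive. For each such (i, z, b) let R̂_{i,b} = (1/N_{i,b}) · ∏_{j=1}^{J} (sum over ordered b_j-tuples of pairwise distinct indices in {1,…,s_{i,j}} of the product of the corresponding r_{i,j,·}). Define L̂ = Σ_{i,z} p_{i,z} Σ_{b_1+⋯+b_J = z} (z! / (b_1!⋯b_J!)) · (∏_{j=1}^{J} c_{i,j}^{b_j}) · R̂_{i,b}. Then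 E[L̂] = Σ_{i∈I} Σ_{z=0}^{D} p_{i,z} · (Σ_{j=1}^{J} c_{i,j} μ_{i,j})^{z}. -/

import Mathlib

/-!
Fix `i` and a multi-index `b`. Given the shot counts `n`, the numerator of `R̂_{i,b}` is a sum over
`∏ⱼ n_j(n_j - 1)⋯(n_j - b_j + 1)` tuples of pairwise distinct outcome indices, and for each of them
the outcomes involved are independent, so the product has mean `∏ⱼ μ_{i,j}^{b_j}`. Since the shot
counts are independent of the outcomes, the joint law is a product measure and Fubini turns the
conditional mean into `E[∏ⱼ s_{i,j}^{(b_j)}] · ∏ⱼ μ_{i,j}^{b_j}`; the normalisation cancels the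
first factor, so `E[R̂_{i,b}] = ∏ⱼ μ_{i,j}^{b_j}`. Linearity of expectation and the multinomial
theorem then give `E[L̂] = L`.
-/

open MeasureTheory ProbabilityTheory Finset

noncomputable def distinctTupleSum {R : Type*} [CommSemiring R] (b n : ℕ) (x : ℕ → R) : R :=
  ∑ f : Fin b ↪ Fin n, ∏ β, x (f β)

lemma abs_distinctTupleSum_le {b n : ℕ} {x : ℕ → ℝ} {C : ℝ} (hx : ∀ k, |x k| ≤ C) :
    |distinctTupleSum b n x| ≤ n.descFactorial b * C ^ b := by
  calc |distinctTupleSum b n x| ≤ ∑ f : Fin b ↪ Fin n, ∏ β, |x (f β)| := by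
        rw [distinctTupleSum]
        simpa only [abs_prod] using abs_sum_le_sum_abs (fun f : Fin b ↪ Fin n => ∏ β, x (f β)) univ
    _ ≤ ∑ _f : Fin b ↪ Fin n, C ^ b := by
        gcongr with f
        exact (prod_le_prod (fun _ _ => abs_nonneg _) fun β _ => hx _).trans_eq (by simp)
    _ = n.descFactorial b * C ^ b := by simp [Fintype.card_embedding_eq]

lemma measurable_distinctTupleSum (b n : ℕ) : Measurable (distinctTupleSum (R := ℝ) b n) :=
  Finset.measurable_sum _ fun _ _ => Finset.measurable_prod _ fun _ _ => measurable_pi_apply _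

lemma sum_pow_eq_sum_antidiagonalTuple {K : Type*} [Semifield K] [CharZero K] {J : ℕ}
    (x : Fin J → K) (z : ℕ) :
    (∑ j, x j) ^ z = ∑ b ∈ Nat.antidiagonalTuple J z,
      (z.factorial / ∏ j, ((b j).factorial : K)) * ∏ j, x j ^ b j := by
  rw [sum_pow_eq_sum_piAntidiag, piAntidiag_univ_fin_eq_antidiagonalTuple]
  refine sum_congr rfl fun b hb => ?_
  have hspec := Nat.multinomial_spec univ b
  rw [Nat.mem_antidiagonalTuple.1 hb] at hspec
  congr 1
  rw [eq_div_iff (prod_ne_zero_iff.2 fun j _ => by exact_mod_cast (b j).factorial_ne_zero),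
    mul_comm]
  exact_mod_cast hspec

theorem ProbabilityTheory.IndepFun.integral_comp_eq_integral_integral {Ω α β E : Type*}
    [MeasurableSpace Ω] [MeasurableSpace α] [MeasurableSpace β] [NormedAddCommGroup E]
    [NormedSpace ℝ E] {P : Measure Ω} [IsFiniteMeasure P] {X : Ω → α} {Y : Ω → β}
    (hXY : IndepFun X Y P) (hX : AEMeasurable X P) (hY : AEMeasurable Y P) {F : α → β → E}
    (hF : StronglyMeasurable (Function.uncurry F))
    (hint : Integrable (fun ω => F (X ω) (Y ω)) P) :
    ∫ ω, F (X ω) (Y ω) ∂P = ∫ ω, ∫ ω', F (X ω) (Y ω') ∂P ∂P := by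
  have hmap := (indepFun_iff_map_prod_eq_prod_map_map hX hY).1 hXY
  have hint' : Integrable (Function.uncurry F) ((P.map X).prod (P.map Y)) := by
    rw [← hmap]
    exact (integrable_map_measure hF.aestronglyMeasurable (hX.prodMk hY)).2 hint
  have hinner : StronglyMeasurable fun a => ∫ b, F a b ∂(P.map Y) := hF.integral_prod_right'
  calc ∫ ω, F (X ω) (Y ω) ∂P = ∫ x, Function.uncurry F x ∂(P.map fun ω => (X ω, Y ω)) :=
        (integral_map (hX.prodMk hY) hF.aestronglyMeasurable).symm
    _ = ∫ a, ∫ b, F a b ∂(P.map Y) ∂(P.map X) := by rw [hmap, integral_prod _ hint']; rfl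
    _ = ∫ ω, ∫ ω', F (X ω) (Y ω') ∂P ∂P := by
        rw [integral_map hX hinner.aestronglyMeasurable]
        congr with ω
        exact integral_map hY (hF.comp_measurable measurable_prodMk_left).aestronglyMeasurable

section DistinctTuples

variable {Ω : Type*} [MeasurableSpace Ω] {P : Measure Ω} {κ : Type*} [Fintype κ]
  {X : κ → ℕ → Ω → ℝ}

lemma integral_prod_distinctTupleSum (hX : iIndepFun (fun q : κ × ℕ => X q.1 q.2) P)
    (hXLp : ∀ j k, MemLp (X j k) ⊤ P) {m : κ → ℝ} (hmean : ∀ j k, ∫ ω, X j k ω ∂P = m j)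
    (b n : κ → ℕ) :
    ∫ ω, ∏ j, distinctTupleSum (b j) (n j) (X j · ω) ∂P =
      ∏ j, ((n j).descFactorial (b j) * m j ^ b j) := by
  classical
  have := hX.isProbabilityMeasure
  have hexpand : ∀ ω, ∏ j, distinctTupleSum (b j) (n j) (X j · ω) =
      ∑ F : (j : κ) → Fin (b j) ↪ Fin (n j), ∏ x : Σ j, Fin (b j), X x.1 (F x.1 x.2) ω := by
    intro ω
    simp only [distinctTupleSum, Fintype.prod_sum, ← univ_sigma_univ, prod_sigma]
  have hterm : ∀ F : (j : κ) → Fin (b j) ↪ Fin (n j),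
      ∫ ω, ∏ x : Σ j, Fin (b j), X x.1 (F x.1 x.2) ω ∂P = ∏ j, m j ^ b j := by
    intro F
    have hinj : Function.Injective fun x : Σ j, Fin (b j) => (x.1, ((F x.1 x.2 : Fin _) : ℕ)) := by
      rintro ⟨j, β⟩ ⟨j', β'⟩ h
      obtain ⟨rfl, h⟩ := Prod.mk.inj h
      exact Sigma.ext rfl (heq_of_eq ((F j).injective (Fin.val_injective h)))
    rw [(hX.precomp hinj).integral_fun_prod_eq_prod_integral
      fun x => (hXLp _ _).aestronglyMeasurable]
    simp [hmean, ← univ_sigma_univ, prod_sigma]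
  have hint : ∀ F : (j : κ) → Fin (b j) ↪ Fin (n j),
      Integrable (fun ω => ∏ x : Σ j, Fin (b j), X x.1 (F x.1 x.2) ω) P := by
    intro F
    have := MemLp.prod' (s := univ) (p := fun _ => ⊤)
      (f := fun (x : Σ j, Fin (b j)) => X x.1 (F x.1 x.2)) fun x _ => hXLp _ _
    simp only [ENNReal.inv_top, sum_const_zero, ENNReal.inv_zero] at this
    exact this.integrable le_top
  simp_rw [hexpand]
  rw [integral_finsetSum _ fun F _ => hint F]
  simp [hterm, prod_mul_distrib, Fintype.card_embedding_eq]

lemma measurable_prod_distinctTupleSum (b : κ → ℕ) :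
    Measurable (Function.uncurry fun (n : κ → ℕ) (y : κ × ℕ → ℝ) =>
      ∏ j, distinctTupleSum (b j) (n j) fun k => y (j, k)) :=
  measurable_from_prod_countable_right fun _ => Finset.measurable_prod _ fun _ _ =>
    (measurable_distinctTupleSum _ _).comp (measurable_pi_lambda _ fun _ => measurable_pi_apply _)

lemma integrable_prod_distinctTupleSum (hXm : ∀ j k, Measurable (X j k)) {C : κ → ℝ}
    (hXC : ∀ j k ω, |X j k ω| ≤ C j) {N : κ → Ω → ℕ} (hNm : ∀ j, Measurable (N j))
    (b : κ → ℕ) (hint : Integrable (fun ω => ((∏ j, (N j ω).descFactorial (b j) : ℕ) : ℝ)) P) :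
    Integrable (fun ω => ∏ j, distinctTupleSum (b j) (N j ω) (X j · ω)) P := by
  have hN : Measurable fun ω j => N j ω := measurable_pi_lambda _ hNm
  have hY : Measurable fun ω (q : κ × ℕ) => X q.1 q.2 ω :=
    measurable_pi_lambda _ fun q => hXm q.1 q.2
  have hmeas : Measurable fun ω => ∏ j, distinctTupleSum (b j) (N j ω) (X j · ω) := by
    have h := (measurable_prod_distinctTupleSum b).comp (hN.prodMk hY)
    exact h
  refine (hint.mul_const (∏ j, C j ^ b j)).mono' hmeas.aestronglyMeasurable
    (ae_of_all _ fun ω => ?_)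
  calc ‖∏ j, distinctTupleSum (b j) (N j ω) (X j · ω)‖
      = ∏ j, |distinctTupleSum (b j) (N j ω) (X j · ω)| := by rw [Real.norm_eq_abs, abs_prod]
    _ ≤ ∏ j, ((N j ω).descFactorial (b j) * C j ^ b j) :=
        prod_le_prod (fun _ _ => abs_nonneg _) fun j _ => abs_distinctTupleSum_le (hXC j · ω)
    _ = _ := by rw [prod_mul_distrib, Nat.cast_prod]

lemma integral_prod_distinctTupleSum_of_indepFun
    (hX : iIndepFun (fun q : κ × ℕ => X q.1 q.2) P)
    (hXm : ∀ j k, Measurable (X j k)) {C : κ → ℝ} (hXC : ∀ j k ω, |X j k ω| ≤ C j)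
    {m : κ → ℝ} (hmean : ∀ j k, ∫ ω, X j k ω ∂P = m j)
    {N : κ → Ω → ℕ} (hNm : ∀ j, Measurable (N j))
    (hNX : IndepFun (fun ω j => N j ω) (fun ω (q : κ × ℕ) => X q.1 q.2 ω) P) (b : κ → ℕ)
    (hint : Integrable (fun ω => ((∏ j, (N j ω).descFactorial (b j) : ℕ) : ℝ)) P) :
    ∫ ω, ∏ j, distinctTupleSum (b j) (N j ω) (X j · ω) ∂P =
      (∫ ω, ((∏ j, (N j ω).descFactorial (b j) : ℕ) : ℝ) ∂P) * ∏ j, m j ^ b j := by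
  have := hX.isProbabilityMeasure
  have hXLp : ∀ j k, MemLp (X j k) ⊤ P := fun j k =>
    memLp_top_of_bound (hXm j k).aestronglyMeasurable (C j) (ae_of_all _ (hXC j k))
  have hN : Measurable fun ω j => N j ω := measurable_pi_lambda _ hNm
  have hY : Measurable fun ω (q : κ × ℕ) => X q.1 q.2 ω :=
    measurable_pi_lambda _ fun q => hXm q.1 q.2
  rw [hNX.integral_comp_eq_integral_integral hN.aemeasurable hY.aemeasurable
    (measurable_prod_distinctTupleSum b).stronglyMeasurable
    (integrable_prod_distinctTupleSum hXm hXC hNm b hint)]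
  simp only [integral_prod_distinctTupleSum hX hXLp hmean, prod_mul_distrib, Nat.cast_prod]
  exact integral_mul_const _ _

end DistinctTuples
theorem unbiased_estimator_polynomial_loss_general
    {Ω : Type*} [MeasurableSpace Ω] (P : Measure Ω) [IsProbabilityMeasure P]
    {I : Type*} [Fintype I]
    (D J : ℕ)
    (p : I → ℕ → ℝ) (c μ : I → Fin J → ℝ)
    (r : I → Fin J → ℕ → Ω → ℝ) (s : I → Fin J → Ω → ℕ)
    (hrmeas : ∀ i j k, Measurable (r i j k))
    (hrbdd : ∀ i j, ∃ C, ∀ k ω, |r i j k ω| ≤ C)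
    (hrindep : iIndepFun
      (fun q : (I × Fin J) × ℕ => r q.1.1 q.1.2 q.2) P)
    (hrmean : ∀ i j k, ∫ ω, r i j k ω ∂P = μ i j)
    (hsmeas : ∀ i j, Measurable (s i j))
    (hsindep : IndepFun (fun ω => fun q : I × Fin J => s q.1 q.2 ω)
      (fun ω => fun q : (I × Fin J) × ℕ => r q.1.1 q.1.2 q.2 ω) P)
    (hNint : ∀ i (b : Fin J → ℕ), (∑ j, b j) ≤ D →
      Integrable (fun ω => ((∏ j, (s i j ω).descFactorial (b j) : ℕ) : ℝ)) P)
    (hNpos : ∀ i (b : Fin J → ℕ), (∑ j, b j) ≤ D →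
      0 < ∫ ω, ((∏ j, (s i j ω).descFactorial (b j) : ℕ) : ℝ) ∂P)
    (Rhat : I → (Fin J → ℕ) → Ω → ℝ) (Lhat : Ω → ℝ)
    (hRhat : ∀ i (b : Fin J → ℕ) ω, Rhat i b ω =
      (∫ ω', ((∏ j, (s i j ω').descFactorial (b j) : ℕ) : ℝ) ∂P)⁻¹ *
        ∏ j, (∑ f : Fin (b j) ↪ Fin (s i j ω), ∏ β, r i j (f β : ℕ) ω))
    (hLhat : ∀ ω, Lhat ω = ∑ i, ∑ z ∈ Finset.range (D + 1), p i z *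
      ∑ b ∈ Finset.Nat.antidiagonalTuple J z,
        ((z.factorial : ℝ) / ∏ j, ((b j).factorial : ℝ)) *
          (∏ j, (c i j) ^ (b j)) * Rhat i b ω) :
    ∫ ω, Lhat ω ∂P =
      ∑ i, ∑ z ∈ Finset.range (D + 1), p i z * (∑ j, c i j * μ i j) ^ z := by
  choose C hC using hrbdd
  have hR : ∀ i, ∀ z ∈ range (D + 1), ∀ b ∈ Nat.antidiagonalTuple J z,
      Integrable (Rhat i b) P ∧ ∫ ω, Rhat i b ω ∂P = ∏ j, μ i j ^ b j := by
    intro i z hz b hb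
    have hbD : ∑ j, b j ≤ D := by
      rw [Nat.mem_antidiagonalTuple.1 hb]; exact Nat.le_of_lt_succ (mem_range.1 hz)
    have hri : iIndepFun (fun q : Fin J × ℕ => r i q.1 q.2) P :=
      hrindep.precomp ((Prod.mk_right_injective i).prodMap Function.injective_id)
    have hsi : IndepFun (fun ω j => s i j ω) (fun ω (q : Fin J × ℕ) => r i q.1 q.2 ω) P :=
      hsindep.comp (φ := fun n j => n (i, j)) (ψ := fun y (q : Fin J × ℕ) => y ((i, q.1), q.2))
        (measurable_pi_lambda _ fun _ => measurable_pi_apply _)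
        (measurable_pi_lambda _ fun _ => measurable_pi_apply _)
    have hint := integrable_prod_distinctTupleSum (hrmeas i) (hC i) (hsmeas i) b (hNint i b hbD)
    have hE := integral_prod_distinctTupleSum_of_indepFun hri (hrmeas i) (hC i) (hrmean i)
      (hsmeas i) hsi b (hNint i b hbD)
    unfold distinctTupleSum at hint hE
    rw [funext (hRhat i b), integral_const_mul, hE, inv_mul_cancel_left₀ (hNpos i b hbD).ne']
    exact ⟨hint.const_mul _, rfl⟩
  have hzint : ∀ i, ∀ z ∈ range (D + 1), Integrable (fun ω => ∑ b ∈ Nat.antidiagonalTuple J z,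
      ((z.factorial : ℝ) / ∏ j, ((b j).factorial : ℝ)) * (∏ j, c i j ^ b j) * Rhat i b ω) P :=
    fun i z hz => integrable_finsetSum _ fun b hb => (hR i z hz b hb).1.const_mul _
  simp_rw [hLhat]
  rw [integral_finsetSum _ fun i _ => integrable_finsetSum _ fun z hz => (hzint i z hz).const_mul _]
  refine sum_congr rfl fun i _ => ?_
  rw [integral_finsetSum _ fun z hz => (hzint i z hz).const_mul _]
  refine sum_congr rfl fun z hz => ?_
  rw [integral_const_mul, integral_finsetSum _ fun b hb => (hR i z hz b hb).1.const_mul _,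
    sum_pow_eq_sum_antidiagonalTuple]
  refine congrArg _ (sum_congr rfl fun b hb => ?_)
  rw [integral_const_mul, (hR i z hz b hb).2]
  simp only [mul_pow, prod_mul_distrib, mul_assoc]

/-- **Proposition 5 (Appendix D): unbiased estimator for polynomial loss functions.**
With coefficients `p i z` (for `z = 0,…,D`) and `c i j`, target expectations `μ i j`,
i.i.d. bounded outcome sequences `(r i j k)` of mean `μ i j` (mutually independent across
distinct `(i,j)`), and shot counts `(s i j)` jointly independent of all outcomes such that
for each tuple `b` of nonnegative integers with `∑ j, b j ≤ D` the expected product of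
falling factorials `N i b = E[∏ j, (s i j)⁻(b j)]` is finite and positive, the estimator
`L̂ = ∑ i, ∑ z ≤ D, p i z * ∑_{b₁+⋯+b_J = z} (z!/(b₁!⋯b_J!)) * (∏ j, (c i j)^(b j)) * R̂ i b`
with `R̂ i b = (1/N i b) * ∏ j, (sum over ordered `b j`-tuples of pairwise distinct indices
of products of outcomes)` satisfies `E[L̂] = ∑ i, ∑ z ≤ D, p i z * (∑ j, c i j * μ i j)^z`. -/
theorem unbiased_estimator_polynomial_loss
    {Ω : Type*} [MeasurableSpace Ω] (P : Measure Ω) [IsProbabilityMeasure P]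
    {I : Type*} [Fintype I]
    (D J : ℕ) (hJ : 1 ≤ J)
    (p : I → ℕ → ℝ) (c μ : I → Fin J → ℝ)
    (r : I → Fin J → ℕ → Ω → ℝ) (s : I → Fin J → Ω → ℕ)
    (hrmeas : ∀ i j k, Measurable (r i j k))
    (hrbdd : ∀ i j, ∃ C, ∀ k ω, |r i j k ω| ≤ C)
    (hrindep : iIndepFun
      (fun q : (I × Fin J) × ℕ => r q.1.1 q.1.2 q.2) P)
    (hrident : ∀ i j k, IdentDistrib (r i j k) (r i j 0) P P)
    (hrmean : ∀ i j k, ∫ ω, r i j k ω ∂P = μ i j)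
    (hsmeas : ∀ i j, Measurable (s i j))
    (hsindep : IndepFun (fun ω => fun q : I × Fin J => s q.1 q.2 ω)
      (fun ω => fun q : (I × Fin J) × ℕ => r q.1.1 q.1.2 q.2 ω) P)
    (hNint : ∀ i (b : Fin J → ℕ), (∑ j, b j) ≤ D →
      Integrable (fun ω => ((∏ j, (s i j ω).descFactorial (b j) : ℕ) : ℝ)) P)
    (hNpos : ∀ i (b : Fin J → ℕ), (∑ j, b j) ≤ D →
      0 < ∫ ω, ((∏ j, (s i j ω).descFactorial (b j) : ℕ) : ℝ) ∂P)
    (Rhat : I → (Fin J → ℕ) → Ω → ℝ) (Lhat : Ω → ℝ)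
    (hRhat : ∀ i (b : Fin J → ℕ) ω, Rhat i b ω =
      (∫ ω', ((∏ j, (s i j ω').descFactorial (b j) : ℕ) : ℝ) ∂P)⁻¹ *
        ∏ j, (∑ f : Fin (b j) ↪ Fin (s i j ω), ∏ β, r i j (f β : ℕ) ω))
    (hLhat : ∀ ω, Lhat ω = ∑ i, ∑ z ∈ Finset.range (D + 1), p i z *
      ∑ b ∈ Finset.Nat.antidiagonalTuple J z,
        ((z.factorial : ℝ) / ∏ j, ((b j).factorial : ℝ)) *
          (∏ j, (c i j) ^ (b j)) * Rhat i b ω) :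
    ∫ ω, Lhat ω ∂P =
      ∑ i, ∑ z ∈ Finset.range (D + 1), p i z * (∑ j, c i j * μ i j) ^ z :=
  unbiased_estimator_polynomial_loss_general P D J p c μ r s hrmeas hrbdd hrindep hrmean hsmeas
    hsindep hNint hNpos Rhat Lhat hRhat hLhat
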